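/- arXiv:2010.06162 — 3 statements merged into one kernel-verified Lean document; each statement's English description precedes it below -/
import Mathlib

section
/- For every n ≥ 2, the canonical monoid homomorphism from the singular braid monoid SM_n to the singular braid group SB_n, sending σ_i ↦ σ_i, σ_i⁻¹ ↦ σ_i⁻¹ and τ_i ↦ τ_i for 1 ≤ i ≤ n−1, is injective; in particular SM_n embeds in a group. -/
/-!
The singular braid monoid `SM n` (n ≥ 2), presented by generators
σ_1,…,σ_{n−1}, σ_1⁻¹,…,σ_{n−1}⁻¹, τ_1,…,τ_{n−1} subject to:
σ_i σ_i⁻¹ = σ_i⁻¹ σ_i = 1; σ_i σ_{i+1} σ_i = σ_{i+1} σ_i σ_{i+1};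
σ_i σ_j = σ_j σ_i for |i−j| ≥ 2; τ_i τ_j = τ_j τ_i for |i−j| ≥ 2;
τ_i σ_j^{±1} = σ_j^{±1} τ_i for |i−j| ≥ 2; τ_i σ_i^{±1} = σ_i^{±1} τ_i;
σ_i σ_{i+1} τ_i = τ_{i+1} σ_i σ_{i+1}; σ_{i+1} σ_i τ_{i+1} = τ_i σ_{i+1} σ_i.
-/

/-- Generators of the singular braid monoid: σ_i, σ_i⁻¹ and τ_i for 1 ≤ i ≤ n−1. -/
inductive SMGen (n : ℕ) : Type
  | sig (i : ℕ) (h : 1 ≤ i ∧ i ≤ n - 1) : SMGen n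
  | sigInv (i : ℕ) (h : 1 ≤ i ∧ i ≤ n - 1) : SMGen n
  | tau (i : ℕ) (h : 1 ≤ i ∧ i ≤ n - 1) : SMGen n

/-- The word σ_i in the free monoid on the generators. -/
def smS (n i : ℕ) : FreeMonoid (SMGen n) :=
  if h : 1 ≤ i ∧ i ≤ n - 1 then FreeMonoid.of (SMGen.sig i h) else 1

/-- The word σ_i⁻¹ in the free monoid on the generators. -/
def smSI (n i : ℕ) : FreeMonoid (SMGen n) :=
  if h : 1 ≤ i ∧ i ≤ n - 1 then FreeMonoid.of (SMGen.sigInv i h) else 1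

/-- The word τ_i in the free monoid on the generators. -/
def smT (n i : ℕ) : FreeMonoid (SMGen n) :=
  if h : 1 ≤ i ∧ i ≤ n - 1 then FreeMonoid.of (SMGen.tau i h) else 1

/-- The defining relations of the singular braid monoid `SM n`. -/
inductive SMRel (n : ℕ) : FreeMonoid (SMGen n) → FreeMonoid (SMGen n) → Prop
  | inv_right (i : ℕ) (h : 1 ≤ i ∧ i ≤ n - 1) :
      SMRel n (smS n i * smSI n i) 1
  | inv_left (i : ℕ) (h : 1 ≤ i ∧ i ≤ n - 1) :
      SMRel n (smSI n i * smS n i) 1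
  | braid (i : ℕ) (h : 1 ≤ i ∧ i + 1 ≤ n - 1) :
      SMRel n (smS n i * smS n (i+1) * smS n i) (smS n (i+1) * smS n i * smS n (i+1))
  | sig_comm (i j : ℕ) (hi : 1 ≤ i ∧ i ≤ n - 1) (hj : 1 ≤ j ∧ j ≤ n - 1)
      (hij : i + 2 ≤ j ∨ j + 2 ≤ i) :
      SMRel n (smS n i * smS n j) (smS n j * smS n i)
  | p_comm (i j : ℕ) (hi : 1 ≤ i ∧ i ≤ n - 1) (hj : 1 ≤ j ∧ j ≤ n - 1)
      (hij : i + 2 ≤ j ∨ j + 2 ≤ i) :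
      SMRel n (smT n i * smT n j) (smT n j * smT n i)
  | p_sig_far_pos (i j : ℕ) (hi : 1 ≤ i ∧ i ≤ n - 1) (hj : 1 ≤ j ∧ j ≤ n - 1)
      (hij : i + 2 ≤ j ∨ j + 2 ≤ i) :
      SMRel n (smT n i * smS n j) (smS n j * smT n i)
  | p_sig_far_neg (i j : ℕ) (hi : 1 ≤ i ∧ i ≤ n - 1) (hj : 1 ≤ j ∧ j ≤ n - 1)
      (hij : i + 2 ≤ j ∨ j + 2 ≤ i) :
      SMRel n (smT n i * smSI n j) (smSI n j * smT n i)
  | p_sig_pos (i : ℕ) (h : 1 ≤ i ∧ i ≤ n - 1) :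
      SMRel n (smT n i * smS n i) (smS n i * smT n i)
  | p_sig_neg (i : ℕ) (h : 1 ≤ i ∧ i ≤ n - 1) :
      SMRel n (smT n i * smSI n i) (smSI n i * smT n i)
  | ssp (i : ℕ) (h : 1 ≤ i ∧ i + 1 ≤ n - 1) :
      SMRel n (smS n i * smS n (i+1) * smT n i) (smT n (i+1) * smS n i * smS n (i+1))
  | ssp' (i : ℕ) (h : 1 ≤ i ∧ i + 1 ≤ n - 1) :
      SMRel n (smS n (i+1) * smS n i * smT n (i+1)) (smT n i * smS n (i+1) * smS n i)

/-- The singular braid monoid `SM n`. -/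
def SM (n : ℕ) := (conGen (SMRel n)).Quotient

instance (n : ℕ) : Monoid (SM n) :=
  inferInstanceAs (Monoid ((conGen (SMRel n)).Quotient))

/-- The generator σ_i of `SM n` (defined for 1 ≤ i ≤ n−1; junk value 1 otherwise). -/
def SM.s (n i : ℕ) : SM n := (conGen (SMRel n)).mk' (smS n i)

/-- The generator σ_i⁻¹ of `SM n` (defined for 1 ≤ i ≤ n−1; junk value 1 otherwise). -/
def SM.sInv (n i : ℕ) : SM n := (conGen (SMRel n)).mk' (smSI n i)

/-- The generator τ_i of `SM n` (defined for 1 ≤ i ≤ n−1; junk value 1 otherwise). -/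
def SM.tau (n i : ℕ) : SM n := (conGen (SMRel n)).mk' (smT n i)

/-!
The singular braid group `SB n` (n ≥ 2), presented by generators σ_1,…,σ_{n−1},
τ_1,…,τ_{n−1} subject to: σ_i σ_{i+1} σ_i = σ_{i+1} σ_i σ_{i+1};
σ_i σ_j = σ_j σ_i for |i−j| ≥ 2; τ_i τ_j = τ_j τ_i for |i−j| ≥ 2;
τ_i σ_j = σ_j τ_i for |i−j| ≥ 2; τ_i σ_i = σ_i τ_i;
σ_i σ_{i+1} τ_i = τ_{i+1} σ_i σ_{i+1}; σ_{i+1} σ_i τ_{i+1} = τ_i σ_{i+1} σ_i.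
-/

/-- Generators of the singular braid group: σ_i and τ_i for 1 ≤ i ≤ n−1. -/
inductive SBGen (n : ℕ) : Type
  | sig (i : ℕ) (h : 1 ≤ i ∧ i ≤ n - 1) : SBGen n
  | tau (i : ℕ) (h : 1 ≤ i ∧ i ≤ n - 1) : SBGen n

/-- The element σ_i of the free group on the generators. -/
def sbS (n i : ℕ) : FreeGroup (SBGen n) :=
  if h : 1 ≤ i ∧ i ≤ n - 1 then FreeGroup.of (SBGen.sig i h) else 1

/-- The element τ_i of the free group on the generators. -/
def sbT (n i : ℕ) : FreeGroup (SBGen n) :=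
  if h : 1 ≤ i ∧ i ≤ n - 1 then FreeGroup.of (SBGen.tau i h) else 1

/-- The relators of the singular braid group `SB n` (each relation l = r is recorded
as the relator l * r⁻¹). -/
inductive SBRel (n : ℕ) : FreeGroup (SBGen n) → Prop
  | braid (i : ℕ) (h : 1 ≤ i ∧ i + 1 ≤ n - 1) :
      SBRel n (sbS n i * sbS n (i+1) * sbS n i * (sbS n (i+1) * sbS n i * sbS n (i+1))⁻¹)
  | sig_comm (i j : ℕ) (hi : 1 ≤ i ∧ i ≤ n - 1) (hj : 1 ≤ j ∧ j ≤ n - 1)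
      (hij : i + 2 ≤ j ∨ j + 2 ≤ i) :
      SBRel n (sbS n i * sbS n j * (sbS n j * sbS n i)⁻¹)
  | tau_comm (i j : ℕ) (hi : 1 ≤ i ∧ i ≤ n - 1) (hj : 1 ≤ j ∧ j ≤ n - 1)
      (hij : i + 2 ≤ j ∨ j + 2 ≤ i) :
      SBRel n (sbT n i * sbT n j * (sbT n j * sbT n i)⁻¹)
  | tau_sig_far (i j : ℕ) (hi : 1 ≤ i ∧ i ≤ n - 1) (hj : 1 ≤ j ∧ j ≤ n - 1)
      (hij : i + 2 ≤ j ∨ j + 2 ≤ i) :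
      SBRel n (sbT n i * sbS n j * (sbS n j * sbT n i)⁻¹)
  | tau_sig (i : ℕ) (h : 1 ≤ i ∧ i ≤ n - 1) :
      SBRel n (sbT n i * sbS n i * (sbS n i * sbT n i)⁻¹)
  | sst (i : ℕ) (h : 1 ≤ i ∧ i + 1 ≤ n - 1) :
      SBRel n (sbS n i * sbS n (i+1) * sbT n i * (sbT n (i+1) * sbS n i * sbS n (i+1))⁻¹)
  | sst' (i : ℕ) (h : 1 ≤ i ∧ i + 1 ≤ n - 1) :
      SBRel n (sbS n (i+1) * sbS n i * sbT n (i+1) * (sbT n i * sbS n (i+1) * sbS n i)⁻¹)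

/-- The singular braid group `SB n`. -/
def SB (n : ℕ) := PresentedGroup {x : FreeGroup (SBGen n) | SBRel n x}

instance (n : ℕ) : Group (SB n) :=
  inferInstanceAs (Group (PresentedGroup {x : FreeGroup (SBGen n) | SBRel n x}))

/-- The generator σ_i of `SB n` (defined for 1 ≤ i ≤ n−1; junk value 1 otherwise). -/
def SB.s (n i : ℕ) : SB n :=
  if h : 1 ≤ i ∧ i ≤ n - 1 then PresentedGroup.of (SBGen.sig i h) else 1

/-- The generator τ_i of `SB n` (defined for 1 ≤ i ≤ n−1; junk value 1 otherwise). -/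
def SB.t (n i : ℕ) : SB n :=
  if h : 1 ≤ i ∧ i ≤ n - 1 then PresentedGroup.of (SBGen.tau i h) else 1

/-!
Let `B` be the braid group. Call the formal conjugates `b τ_i b⁻¹` of the `τ_i` by braids
*bands*, identified along the relations `u τ_i u⁻¹ = τ_j` of `SM n`; two bands commute when they
are simultaneously conjugate to `τ_i` and `τ_j` with `|i - j| ≥ 2`. Let `T` and `G` be the trace
monoid and the trace group on the bands. Then `SM n` maps to `T ⋊ B` (`SMSemidirect n`) with a
left inverse, which sends a band to the conjugate of `τ_i` it names, and `T ⋊ B` maps to `G ⋊ B`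
(`SBSemidirect n`). The composite `SM n → G ⋊ B` is the canonical map `SM n → SB n` followed by
the evident map `SB n → G ⋊ B`, so the canonical map is injective once `T` embeds in `G`.

A trace monoid embeds in its trace group: if two words `a u` and `v` are equal in the group, their
images in the free groups on `{a}` and on `{a, x}`, for a letter `x` not commuting with `a`, show
that `v = v₁ a v₂` with every letter of `v₁` commuting with `a`; so `v = a v₁ v₂` in the monoid,
and one cancels `a` and inducts.
-/

theorem FreeGroup.freeMonoidLift_of_injective {α : Type*} :
    Function.Injective (FreeMonoid.lift (FreeGroup.of : α → FreeGroup α)) := by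
  classical
  have isReduced (L : List α) : FreeGroup.IsReduced (L.map (·, true)) := by
    simpa [FreeGroup.IsReduced, List.isChain_map] using
      (List.pairwise_of_forall (l := L) (R := fun _ _ => True) fun _ _ => trivial).isChain
  have toWord_lift (w : FreeMonoid α) :
      (FreeMonoid.lift FreeGroup.of w).toWord = w.toList.map (·, true) := by
    induction w using FreeMonoid.inductionOn' with
    | one => rfl
    | of_mul a w ih =>
      rw [_root_.map_mul, FreeMonoid.lift_eval_of, FreeGroup.toWord_mul, ih, FreeGroup.toWord_of,
        FreeMonoid.toList_mul, FreeMonoid.toList_of]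
      exact (isReduced (a :: w.toList)).reduce_eq
  intro u v h
  have := congrArg FreeGroup.toWord h
  rw [toWord_lift, toWord_lift] at this
  exact FreeMonoid.toList.injective
    (List.map_injective_iff.2 (fun a b hab => (Prod.mk.inj hab).1) this)

theorem Units.conj_conj {M : Type*} [Monoid M] (u v : Mˣ) (x : M) :
    (u : M) * (v * x * ↑v⁻¹) * ↑u⁻¹ = ↑(u * v) * x * ↑(u * v)⁻¹ := by
  simp only [mul_inv_rev, Units.val_mul, mul_assoc]

/-! ## Trace monoids and trace groups -/

section Trace

variable {V : Type*} (E : V → V → Prop)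

inductive TraceRel : FreeMonoid V → FreeMonoid V → Prop
  | swap {a b : V} : E a b → TraceRel (.of a * .of b) (.of b * .of a)

abbrev TraceMonoid := PresentedMonoid (TraceRel E)

def traceRels : Set (FreeGroup V) :=
  {r | ∃ a b, E a b ∧ r = .of a * .of b * (.of b * .of a)⁻¹}

abbrev TraceGroup := PresentedGroup (traceRels E)

variable {E}

namespace TraceMonoid

theorem of_mul_of_comm {a b : V} (h : E a b) :
    PresentedMonoid.of (TraceRel E) a * .of _ b = .of _ b * .of _ a :=
  PresentedMonoid.mk_eq_mk_of_rel (.swap h)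

def ofList (u : List V) : TraceMonoid E := PresentedMonoid.mk _ (FreeMonoid.ofList u)

theorem ofList_surjective : Function.Surjective (ofList (E := E)) :=
  fun x => PresentedMonoid.inductionOn x fun w => ⟨w.toList, rfl⟩

@[simp] theorem ofList_cons (a : V) (u : List V) :
    ofList (E := E) (a :: u) = .of _ a * ofList u := rfl

theorem ofList_append_cons_of_comm {a : V} {u v : List V} (h : ∀ x ∈ u, E a x ∨ E x a) :
    ofList (E := E) (u ++ a :: v) = ofList (a :: (u ++ v)) := by
  induction u with
  | nil => rfl
  | cons x u ih =>
    have hxa : PresentedMonoid.of (TraceRel E) x * .of _ a = .of _ a * .of _ x := by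
      rcases h x List.mem_cons_self with hax | hxa
      · exact (of_mul_of_comm hax).symm
      · exact of_mul_of_comm hxa
    simp only [List.cons_append, ofList_cons] at ih ⊢
    rw [ih fun y hy => h y (List.mem_cons_of_mem x hy), ← mul_assoc, hxa, mul_assoc]

end TraceMonoid

namespace TraceGroup

theorem of_mul_of_comm {a b : V} (h : E a b) :
    (PresentedGroup.of a : TraceGroup E) * .of b = .of b * .of a :=
  PresentedGroup.mk_eq_mk_of_mul_inv_mem ⟨a, b, h, rfl⟩

def restrict (p : V → Prop) [DecidablePred p] (hp : ∀ a b, p a → p b → E a b → a = b) :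
    TraceGroup E →* FreeGroup V :=
  PresentedGroup.toGroup (f := fun x => if p x then .of x else 1) <| by
    rintro _ ⟨a, b, h, rfl⟩
    by_cases ha : p a
    · by_cases hb : p b
      · obtain rfl := hp a b ha hb h
        simp
      · simp [ha, hb]
    · simp [ha]

@[simp] theorem restrict_of (p : V → Prop) [DecidablePred p]
    (hp : ∀ a b, p a → p b → E a b → a = b) (a : V) :
    restrict p hp (.of a) = if p a then .of a else 1 :=
  PresentedGroup.toGroup.of _

end TraceGroup

namespace TraceMonoid

variable (E) in
def toTraceGroup : TraceMonoid E →* TraceGroup E :=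
  PresentedMonoid.lift PresentedGroup.of fun _ _ ⟨h⟩ => by
    simpa using TraceGroup.of_mul_of_comm h

@[simp] theorem toTraceGroup_of (a : V) :
    toTraceGroup E (.of _ a) = PresentedGroup.of a := rfl

theorem restrict_toTraceGroup_ofList (p : V → Prop) [DecidablePred p]
    (hp : ∀ a b, p a → p b → E a b → a = b) (u : List V) :
    TraceGroup.restrict p hp (toTraceGroup E (ofList u)) =
      FreeMonoid.lift FreeGroup.of (FreeMonoid.ofList (u.filter p)) := by
  induction u with
  | nil => rfl
  | cons a u ih =>
    rw [ofList_cons, map_mul, map_mul, ih, toTraceGroup_of, TraceGroup.restrict_of,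
      List.filter_cons]
    by_cases ha : p a <;> simp [ha, FreeMonoid.ofList_cons]

theorem filter_eq_of_toTraceGroup_eq (p : V → Prop) [DecidablePred p]
    (hp : ∀ a b, p a → p b → E a b → a = b) {u v : List V}
    (h : toTraceGroup E (ofList u) = toTraceGroup E (ofList v)) :
    u.filter p = v.filter p := by
  have := congrArg (TraceGroup.restrict p hp) h
  rw [restrict_toTraceGroup_ofList, restrict_toTraceGroup_ofList] at this
  exact FreeMonoid.ofList.injective (FreeGroup.freeMonoidLift_of_injective this)

theorem mem_of_toTraceGroup_eq {a : V} {u v : List V}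
    (h : toTraceGroup E (ofList (a :: u)) = toTraceGroup E (ofList v)) : a ∈ v := by
  classical
  have ha : a ∈ (a :: u).filter (· = a) := by simp
  rw [filter_eq_of_toTraceGroup_eq (· = a) (fun _ _ hx hy _ => hx.trans hy.symm) h] at ha
  exact (List.mem_filter.1 ha).1

/-- A letter `x` of `v₁` commuting with `a` in neither order would come before `a` in the image
of the right-hand side in the free group on `{a, x}`. -/
theorem comm_of_toTraceGroup_eq {a x : V} {u v₁ v₂ : List V}
    (h : toTraceGroup E (ofList (a :: u)) = toTraceGroup E (ofList (v₁ ++ a :: v₂)))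
    (ha : a ∉ v₁) (hx : x ∈ v₁) : E a x ∨ E x a := by
  classical
  by_contra hax
  rw [not_or] at hax
  have hxa : x ≠ a := fun h => ha (h ▸ hx)
  have hf := congrArg List.head? <| filter_eq_of_toTraceGroup_eq (fun y => y = a ∨ y = x)
    (by rintro _ _ (rfl | rfl) (rfl | rfl) hE <;> first | rfl | exact absurd hE hax.1 |
          exact absurd hE hax.2) h
  obtain ⟨y, hy⟩ : ∃ y, (v₁.filter fun y => y = a ∨ y = x).head? = some y :=
    Option.isSome_iff_exists.1 (by simpa [List.filter_eq_nil_iff] using ⟨x, hx, by simp⟩)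
  rw [List.filter_append, List.head?_append, hy, List.filter_cons_of_pos (by simp)] at hf
  obtain ⟨hyv, hya | hyx⟩ := by simpa using List.mem_of_mem_head? hy
  · exact ha (hya ▸ hyv)
  · simp [hyx] at hf
    exact hxa hf.symm

theorem toTraceGroup_injective : Function.Injective (toTraceGroup E) := by
  suffices ∀ u v : List V, toTraceGroup E (ofList u) = toTraceGroup E (ofList v) →
      ofList (E := E) u = ofList v by
    intro x y h
    obtain ⟨u, rfl⟩ := ofList_surjective x
    obtain ⟨v, rfl⟩ := ofList_surjective y
    exact this u v h
  intro u
  induction u with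
  | nil =>
    rintro (_ | ⟨b, v⟩) h
    · rfl
    · exact absurd (mem_of_toTraceGroup_eq h.symm) List.not_mem_nil
  | cons a u ih =>
    intro v h
    classical
    obtain ⟨v₁, v₂, hav₁, rfl, -⟩ := List.exists_erase_eq (mem_of_toTraceGroup_eq h)
    have hcomm : ∀ x ∈ v₁, E a x ∨ E x a := fun x hx => comm_of_toTraceGroup_eq h hav₁ hx
    rw [ofList_append_cons_of_comm hcomm, ofList_cons, ofList_cons, map_mul, map_mul] at h
    rw [ofList_append_cons_of_comm hcomm, ofList_cons, ofList_cons,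
      ih (v₁ ++ v₂) (mul_left_cancel h)]

end TraceMonoid

end Trace

section TraceAction

variable {V : Type*} {E : V → V → Prop}

namespace TraceMonoid

variable {G : Type*} [Monoid G] [MulAction G V]

def toMonoidEnd (hE : ∀ (g : G) {a b}, E a b → E (g • a) (g • b)) :
    G →* Monoid.End (TraceMonoid E) where
  toFun g := PresentedMonoid.lift (fun a => .of _ (g • a)) fun _ _ ⟨h⟩ => by
    simpa using of_mul_of_comm (hE g h)
  map_one' := PresentedMonoid.ext _ fun a => by simp; rfl
  map_mul' g h := PresentedMonoid.ext _ fun a => by simp [mul_smul]; rfl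

@[simp] theorem toMonoidEnd_of (hE : ∀ (g : G) {a b}, E a b → E (g • a) (g • b)) (g : G)
    (a : V) : toMonoidEnd hE g (.of _ a) = .of _ (g • a) := rfl

end TraceMonoid

namespace TraceGroup

variable {G : Type*} [Group G] [MulAction G V] (hE : ∀ (g : G) {a b}, E a b → E (g • a) (g • b))

def smulHom (g : G) : TraceGroup E →* TraceGroup E :=
  PresentedGroup.toGroup (f := fun a => .of (g • a)) <| by
    rintro _ ⟨a, b, h, rfl⟩
    simp only [map_mul, map_inv, FreeGroup.lift_apply_of]
    exact mul_inv_eq_one.2 (of_mul_of_comm (hE g h))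

@[simp] theorem smulHom_of (g : G) (a : V) :
    smulHom hE g (.of a) = .of (g • a) := PresentedGroup.toGroup.of _

theorem smulHom_one : smulHom hE 1 = MonoidHom.id _ :=
  PresentedGroup.ext fun a => by simp

theorem smulHom_mul (g h : G) : smulHom hE (g * h) = (smulHom hE g).comp (smulHom hE h) :=
  PresentedGroup.ext fun a => by simp [mul_smul]

def toMulAut : G →* MulAut (TraceGroup E) where
  toFun g := (smulHom hE g).toMulEquiv (smulHom hE g⁻¹)
    (by rw [← smulHom_mul, inv_mul_cancel, smulHom_one])
    (by rw [← smulHom_mul, mul_inv_cancel, smulHom_one])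
  map_one' := MulEquiv.ext fun x => by simp [smulHom_one]
  map_mul' g h := MulEquiv.ext fun x => by simp [smulHom_mul]

@[simp] theorem toMulAut_of (g : G) (a : V) : toMulAut hE g (.of a) = .of (g • a) :=
  smulHom_of hE g a

theorem _root_.TraceMonoid.toTraceGroup_toMonoidEnd (g : G) (x : TraceMonoid E) :
    TraceMonoid.toTraceGroup E (TraceMonoid.toMonoidEnd hE g x) =
      toMulAut hE g (TraceMonoid.toTraceGroup E x) := by
  have : (TraceMonoid.toTraceGroup E).comp (TraceMonoid.toMonoidEnd hE g) =
      (toMulAut hE g).toMonoidHom.comp (TraceMonoid.toTraceGroup E) :=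
    PresentedMonoid.ext _ fun a => (toMulAut_of hE g a).symm
  exact DFunLike.congr_fun this x

end TraceGroup

end TraceAction

/-! ## Semidirect products of monoids -/

@[ext] structure MonoidSemidirectProduct (N G : Type*) [Monoid N] [Monoid G]
    (φ : G →* Monoid.End N) where
  left : N
  right : G

namespace MonoidSemidirectProduct

variable {N G : Type*} [Monoid N] [Monoid G] {φ : G →* Monoid.End N}

instance : Monoid (MonoidSemidirectProduct N G φ) where
  mul x y := ⟨x.left * φ x.right y.left, x.right * y.right⟩
  one := ⟨1, 1⟩
  mul_assoc x y z := by
    ext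
    · change x.left * φ x.right y.left * φ (x.right * y.right) z.left =
        x.left * φ x.right (y.left * φ y.right z.left)
      rw [map_mul, map_mul, Monoid.End.coe_mul, Function.comp_apply, mul_assoc]
    · exact mul_assoc x.right y.right z.right
  one_mul x := by
    ext
    · change 1 * φ 1 x.left = x.left
      rw [map_one, one_mul]; rfl
    · exact one_mul x.right
  mul_one x := by
    ext
    · change x.left * φ x.right 1 = x.left
      rw [map_one, mul_one]
    · exact mul_one x.right

@[simp] theorem mul_left (x y : MonoidSemidirectProduct N G φ) :
    (x * y).left = x.left * φ x.right y.left := rfl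

@[simp] theorem mul_right (x y : MonoidSemidirectProduct N G φ) :
    (x * y).right = x.right * y.right := rfl

@[simp] theorem one_left : (1 : MonoidSemidirectProduct N G φ).left = 1 := rfl

@[simp] theorem one_right : (1 : MonoidSemidirectProduct N G φ).right = 1 := rfl

def lift {M : Type*} [Monoid M] (f : N →* M) (ι : G →* Mˣ)
    (hf : ∀ g x, f (φ g x) = ι g * f x * ↑(ι g)⁻¹) : MonoidSemidirectProduct N G φ →* M where
  toFun x := f x.left * ι x.right
  map_one' := by simp
  map_mul' x y := by simp [hf, mul_assoc]

@[simp] theorem lift_apply {M : Type*} [Monoid M] (f : N →* M) (ι : G →* Mˣ)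
    (hf : ∀ g x, f (φ g x) = ι g * f x * ↑(ι g)⁻¹) (x : MonoidSemidirectProduct N G φ) :
    lift f ι hf x = f x.left * ι x.right := rfl

section ToGroup

variable {K H : Type*} [Group K] [Group H] {ψ : H →* MulAut K} {φ : H →* Monoid.End N}

def toSemidirectProduct (μ : N →* K) (hμ : ∀ g x, μ (φ g x) = ψ g (μ x)) :
    MonoidSemidirectProduct N H φ →* K ⋊[ψ] H where
  toFun x := ⟨μ x.left, x.right⟩
  map_one' := by ext <;> simp
  map_mul' x y := by ext <;> simp [hμ]

@[simp] theorem toSemidirectProduct_apply (μ : N →* K) (hμ : ∀ g x, μ (φ g x) = ψ g (μ x))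
    (x : MonoidSemidirectProduct N H φ) :
    toSemidirectProduct μ hμ x = ⟨μ x.left, x.right⟩ := rfl

theorem toSemidirectProduct_injective {μ : N →* K} (hμ : ∀ g x, μ (φ g x) = ψ g (μ x))
    (hinj : Function.Injective μ) : Function.Injective (toSemidirectProduct μ hμ) := by
  intro x y h
  ext
  · exact hinj (congrArg SemidirectProduct.left h)
  · exact congrArg SemidirectProduct.right h

end ToGroup

end MonoidSemidirectProduct

/-! ## Braids and bands -/

section Bands

variable {n : ℕ}

theorem bounds_of_succ_bounds {i : ℕ} (h : 1 ≤ i ∧ i + 1 ≤ n - 1) :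
    (1 ≤ i ∧ i ≤ n - 1) ∧ (1 ≤ i + 1 ∧ i + 1 ≤ n - 1) :=
  ⟨⟨h.1, by omega⟩, by omega, h.2⟩

inductive BraidRel (n : ℕ) : FreeGroup ℕ → Prop
  | braid (i : ℕ) (h : 1 ≤ i ∧ i + 1 ≤ n - 1) :
      BraidRel n (.of i * .of (i+1) * .of i * (.of (i+1) * .of i * .of (i+1))⁻¹)
  | comm (i j : ℕ) (hi : 1 ≤ i ∧ i ≤ n - 1) (hj : 1 ≤ j ∧ j ≤ n - 1)
      (hij : i + 2 ≤ j ∨ j + 2 ≤ i) :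
      BraidRel n (.of i * .of j * (.of j * .of i)⁻¹)

/-- The braid group on `n` strands, together with a free generator for each index outside
`[1, n - 1]`; these extra generators are never used. -/
abbrev BraidGroup (n : ℕ) := PresentedGroup {x | BraidRel n x}

namespace BraidGroup

def s (n i : ℕ) : BraidGroup n := PresentedGroup.of i

theorem braid (i : ℕ) (h : 1 ≤ i ∧ i + 1 ≤ n - 1) :
    s n i * s n (i+1) * s n i = s n (i+1) * s n i * s n (i+1) :=
  PresentedGroup.mk_eq_mk_of_mul_inv_mem (BraidRel.braid i h)

theorem comm (i j : ℕ) (hi : 1 ≤ i ∧ i ≤ n - 1) (hj : 1 ≤ j ∧ j ≤ n - 1)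
    (hij : i + 2 ≤ j ∨ j + 2 ≤ i) : s n i * s n j = s n j * s n i :=
  PresentedGroup.mk_eq_mk_of_mul_inv_mem (BraidRel.comm i j hi hj hij)

end BraidGroup

/-- `BandMove n u i j`: the relations of `SM n` say that `u τ_i u⁻¹ = τ_j`. -/
inductive BandMove (n : ℕ) : BraidGroup n → ℕ → ℕ → Prop
  | sig {i : ℕ} (h : 1 ≤ i ∧ i ≤ n - 1) : BandMove n (.s n i) i i
  | far {i j : ℕ} (hi : 1 ≤ i ∧ i ≤ n - 1) (hj : 1 ≤ j ∧ j ≤ n - 1)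
      (hij : i + 2 ≤ j ∨ j + 2 ≤ i) : BandMove n (.s n j) i i
  | sig_sig {i : ℕ} (h : 1 ≤ i ∧ i + 1 ≤ n - 1) :
      BandMove n (.s n i * .s n (i+1)) i (i+1)
  | sig_sig' {i : ℕ} (h : 1 ≤ i ∧ i + 1 ≤ n - 1) :
      BandMove n (.s n (i+1) * .s n i) (i+1) i

/-- `(b, i)` stands for the band `b τ_i b⁻¹`. -/
def Band (n : ℕ) := Quot fun p q : BraidGroup n × ℕ => ∃ u, BandMove n u p.2 q.2 ∧ p.1 = q.1 * u

namespace Band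

def mk (b : BraidGroup n) (i : ℕ) : Band n := Quot.mk _ (b, i)

theorem exists_eq_mk (x : Band n) : ∃ b i, x = mk b i :=
  let ⟨p, hp⟩ := Quot.exists_rep x
  ⟨p.1, p.2, hp.symm⟩

theorem mk_mul_eq {u : BraidGroup n} {i j : ℕ} (h : BandMove n u i j) (b : BraidGroup n) :
    mk (b * u) i = mk b j :=
  Quot.sound ⟨u, h, rfl⟩

instance : MulAction (BraidGroup n) (Band n) where
  smul g := Quot.lift (fun p => mk (g * p.1) p.2) <| by
    rintro ⟨_, i⟩ ⟨b, j⟩ ⟨u, hu, rfl⟩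
    exact (congrArg (mk · i) (mul_assoc g b u).symm).trans (mk_mul_eq hu _)
  one_smul := Quot.ind fun p => congrArg (mk · p.2) (one_mul p.1)
  mul_smul g h := Quot.ind fun p => congrArg (mk · p.2) (mul_assoc g h p.1)

@[simp] theorem smul_mk (g b : BraidGroup n) (i : ℕ) : g • mk b i = mk (g * b) i := rfl

def Apart (x y : Band n) : Prop :=
  ∃ b i j, (1 ≤ i ∧ i ≤ n - 1) ∧ (1 ≤ j ∧ j ≤ n - 1) ∧ (i + 2 ≤ j ∨ j + 2 ≤ i) ∧
    x = mk b i ∧ y = mk b j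

theorem Apart.smul (g : BraidGroup n) {x y : Band n} (h : Apart x y) :
    Apart (g • x) (g • y) := by
  obtain ⟨b, i, j, hi, hj, hij, rfl, rfl⟩ := h
  exact ⟨g * b, i, j, hi, hj, hij, rfl, rfl⟩

end Band

abbrev SMSemidirect (n : ℕ) :=
  MonoidSemidirectProduct (TraceMonoid (Band.Apart (n := n))) (BraidGroup n)
    (TraceMonoid.toMonoidEnd Band.Apart.smul)

abbrev SBSemidirect (n : ℕ) :=
  TraceGroup (Band.Apart (n := n)) ⋊[TraceGroup.toMulAut Band.Apart.smul] BraidGroup n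

end Bands

/-! ## The retraction `SMSemidirect n → SM n` -/

section Retraction

variable {n : ℕ}

namespace SM

theorem mk_eq_of_rel {u v : FreeMonoid (SMGen n)} (h : SMRel n u v) :
    (conGen (SMRel n)).mk' u = (conGen (SMRel n)).mk' v :=
  (Con.eq _).2 (.of _ _ h)

theorem s_eq_mk {i : ℕ} (h : 1 ≤ i ∧ i ≤ n - 1) :
    SM.s n i = (conGen (SMRel n)).mk' (.of (.sig i h)) :=
  congrArg _ (dif_pos h)

theorem sInv_eq_mk {i : ℕ} (h : 1 ≤ i ∧ i ≤ n - 1) :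
    SM.sInv n i = (conGen (SMRel n)).mk' (.of (.sigInv i h)) :=
  congrArg _ (dif_pos h)

theorem tau_eq_mk {i : ℕ} (h : 1 ≤ i ∧ i ≤ n - 1) :
    SM.tau n i = (conGen (SMRel n)).mk' (.of (.tau i h)) :=
  congrArg _ (dif_pos h)

def sUnit (i : ℕ) (h : 1 ≤ i ∧ i ≤ n - 1) : (SM n)ˣ :=
  ⟨SM.s n i, SM.sInv n i, mk_eq_of_rel (.inv_right i h), mk_eq_of_rel (.inv_left i h)⟩

end SM

namespace BraidGroup

def toSMUnits : BraidGroup n →* (SM n)ˣ :=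
  PresentedGroup.toGroup (f := fun i => if h : 1 ≤ i ∧ i ≤ n - 1 then SM.sUnit i h else 1) <| by
    rintro _ (⟨i, h⟩ | ⟨i, j, hi, hj, hij⟩)
    · obtain ⟨hi, hi'⟩ := bounds_of_succ_bounds h
      simp only [map_mul, map_inv, FreeGroup.lift_apply_of, dif_pos hi, dif_pos hi',
        mul_inv_eq_one]
      exact Units.ext (SM.mk_eq_of_rel (.braid i h))
    · simp only [map_mul, map_inv, FreeGroup.lift_apply_of, dif_pos hi, dif_pos hj,
        mul_inv_eq_one]
      exact Units.ext (SM.mk_eq_of_rel (.sig_comm i j hi hj hij))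

theorem toSMUnits_s {i : ℕ} (h : 1 ≤ i ∧ i ≤ n - 1) : toSMUnits (s n i) = SM.sUnit i h :=
  (PresentedGroup.toGroup.of _).trans (dif_pos h)

end BraidGroup

open BraidGroup (toSMUnits toSMUnits_s)

theorem BandMove.conj_tau {u : BraidGroup n} {i j : ℕ} (h : BandMove n u i j) :
    (toSMUnits u : SM n) * SM.tau n i * ↑(toSMUnits u)⁻¹ = SM.tau n j := by
  rw [Units.mul_inv_eq_iff_eq_mul]
  cases h with
  | sig h => rw [toSMUnits_s h]; exact (SM.mk_eq_of_rel (.p_sig_pos _ h)).symm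
  | far hi hj hij =>
    rw [toSMUnits_s hj]; exact (SM.mk_eq_of_rel (.p_sig_far_pos _ _ hi hj hij)).symm
  | sig_sig h =>
    obtain ⟨hi, hi'⟩ := bounds_of_succ_bounds h
    rw [map_mul, Units.val_mul, toSMUnits_s hi, toSMUnits_s hi', ← mul_assoc]
    exact SM.mk_eq_of_rel (.ssp _ h)
  | sig_sig' h =>
    obtain ⟨hi, hi'⟩ := bounds_of_succ_bounds h
    rw [map_mul, Units.val_mul, toSMUnits_s hi, toSMUnits_s hi', ← mul_assoc]
    exact SM.mk_eq_of_rel (.ssp' _ h)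

def Band.toSM : Band n → SM n :=
  Quot.lift (fun p => (toSMUnits p.1 : SM n) * SM.tau n p.2 * ↑(toSMUnits p.1)⁻¹) <| by
    rintro ⟨_, i⟩ ⟨b, j⟩ ⟨u, hu, rfl⟩
    dsimp only
    rw [map_mul, ← Units.conj_conj, hu.conj_tau]

@[simp] theorem Band.toSM_mk (b : BraidGroup n) (i : ℕ) :
    (Band.mk b i).toSM = (toSMUnits b : SM n) * SM.tau n i * ↑(toSMUnits b)⁻¹ := rfl

def SM.ofBands : TraceMonoid (Band.Apart (n := n)) →* SM n :=
  PresentedMonoid.lift Band.toSM fun _ _ ⟨⟨b, i, j, hi, hj, hij, hx, hy⟩⟩ => by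
    have hτ : SM.tau n i * SM.tau n j = SM.tau n j * SM.tau n i :=
      SM.mk_eq_of_rel (.p_comm i j hi hj hij)
    simp only [map_mul, FreeMonoid.lift_eval_of, hx, hy, Band.toSM_mk, mul_assoc,
      Units.inv_mul_cancel_left]
    rw [← mul_assoc (SM.tau n i), hτ, mul_assoc]

@[simp] theorem SM.ofBands_of (x : Band n) : SM.ofBands (PresentedMonoid.of _ x) = x.toSM := rfl

theorem SM.ofBands_toMonoidEnd (g : BraidGroup n) (x : TraceMonoid (Band.Apart (n := n))) :
    SM.ofBands (TraceMonoid.toMonoidEnd Band.Apart.smul g x) =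
      ↑(toSMUnits g) * SM.ofBands x * ↑(toSMUnits g)⁻¹ := by
  have hx : x ∈ Submonoid.closure (Set.range (PresentedMonoid.of _)) := by
    rw [PresentedMonoid.closure_range_of]; exact Submonoid.mem_top x
  induction hx using Submonoid.closure_induction with
  | mem _ ha =>
    obtain ⟨a, rfl⟩ := ha
    obtain ⟨b, i, rfl⟩ := Band.exists_eq_mk a
    simp [mul_assoc]
  | one => simp
  | mul x y _ _ hx hy => simp only [map_mul, hx, hy, mul_assoc, Units.inv_mul_cancel_left]

def SMSemidirect.toSM : SMSemidirect n →* SM n :=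
  MonoidSemidirectProduct.lift SM.ofBands toSMUnits SM.ofBands_toMonoidEnd

end Retraction

/-! ## The canonical map `SM n → SB n` -/

section Canonical

variable {n : ℕ}

namespace SB

theorem s_of {i : ℕ} (h : 1 ≤ i ∧ i ≤ n - 1) : SB.s n i = PresentedGroup.of (.sig i h) :=
  dif_pos h

theorem t_of {i : ℕ} (h : 1 ≤ i ∧ i ≤ n - 1) : SB.t n i = PresentedGroup.of (.tau i h) :=
  dif_pos h

theorem s_eq_one {i : ℕ} (h : ¬(1 ≤ i ∧ i ≤ n - 1)) : SB.s n i = 1 := dif_neg h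

theorem t_eq_one {i : ℕ} (h : ¬(1 ≤ i ∧ i ≤ n - 1)) : SB.t n i = 1 := dif_neg h

theorem mk_sbS (i : ℕ) : PresentedGroup.mk _ (sbS n i) = SB.s n i := by
  by_cases h : 1 ≤ i ∧ i ≤ n - 1
  · rw [sbS, dif_pos h, s_of h]; rfl
  · rw [sbS, dif_neg h, map_one, s_eq_one h]; rfl

theorem mk_sbT (i : ℕ) : PresentedGroup.mk _ (sbT n i) = SB.t n i := by
  by_cases h : 1 ≤ i ∧ i ≤ n - 1
  · rw [sbT, dif_pos h, t_of h]; rfl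
  · rw [sbT, dif_neg h, map_one, t_eq_one h]; rfl

theorem mk_eq_of_rel {x y : FreeGroup (SBGen n)} (h : SBRel n (x * y⁻¹)) :
    PresentedGroup.mk {r | SBRel n r} x = PresentedGroup.mk _ y :=
  PresentedGroup.mk_eq_mk_of_mul_inv_mem h

theorem braid (i : ℕ) (h : 1 ≤ i ∧ i + 1 ≤ n - 1) :
    SB.s n i * SB.s n (i+1) * SB.s n i = SB.s n (i+1) * SB.s n i * SB.s n (i+1) := by
  have hrel := mk_eq_of_rel (.braid i h)
  simp only [map_mul, mk_sbS] at hrel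
  exact hrel

theorem sig_comm (i j : ℕ) (hi : 1 ≤ i ∧ i ≤ n - 1) (hj : 1 ≤ j ∧ j ≤ n - 1)
    (hij : i + 2 ≤ j ∨ j + 2 ≤ i) : SB.s n i * SB.s n j = SB.s n j * SB.s n i := by
  have hrel := mk_eq_of_rel (.sig_comm i j hi hj hij)
  simp only [map_mul, mk_sbS] at hrel
  exact hrel

theorem tau_comm (i j : ℕ) (hi : 1 ≤ i ∧ i ≤ n - 1) (hj : 1 ≤ j ∧ j ≤ n - 1)
    (hij : i + 2 ≤ j ∨ j + 2 ≤ i) : SB.t n i * SB.t n j = SB.t n j * SB.t n i := by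
  have hrel := mk_eq_of_rel (.tau_comm i j hi hj hij)
  simp only [map_mul, mk_sbT] at hrel
  exact hrel

theorem tau_sig_far (i j : ℕ) (hi : 1 ≤ i ∧ i ≤ n - 1) (hj : 1 ≤ j ∧ j ≤ n - 1)
    (hij : i + 2 ≤ j ∨ j + 2 ≤ i) : SB.t n i * SB.s n j = SB.s n j * SB.t n i := by
  have hrel := mk_eq_of_rel (.tau_sig_far i j hi hj hij)
  simp only [map_mul, mk_sbS, mk_sbT] at hrel
  exact hrel

theorem tau_sig (i : ℕ) (h : 1 ≤ i ∧ i ≤ n - 1) :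
    SB.t n i * SB.s n i = SB.s n i * SB.t n i := by
  have hrel := mk_eq_of_rel (.tau_sig i h)
  simp only [map_mul, mk_sbS, mk_sbT] at hrel
  exact hrel

theorem sst (i : ℕ) (h : 1 ≤ i ∧ i + 1 ≤ n - 1) :
    SB.s n i * SB.s n (i+1) * SB.t n i = SB.t n (i+1) * SB.s n i * SB.s n (i+1) := by
  have hrel := mk_eq_of_rel (.sst i h)
  simp only [map_mul, mk_sbS, mk_sbT] at hrel
  exact hrel

theorem sst' (i : ℕ) (h : 1 ≤ i ∧ i + 1 ≤ n - 1) :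
    SB.s n (i+1) * SB.s n i * SB.t n (i+1) = SB.t n i * SB.s n (i+1) * SB.s n i := by
  have hrel := mk_eq_of_rel (.sst' i h)
  simp only [map_mul, mk_sbS, mk_sbT] at hrel
  exact hrel

end SB

def SMGen.toSB : SMGen n → SB n
  | .sig i _ => SB.s n i
  | .sigInv i _ => (SB.s n i)⁻¹
  | .tau i _ => SB.t n i

theorem SMGen.lift_toSB_smS (i : ℕ) : FreeMonoid.lift SMGen.toSB (smS n i) = SB.s n i := by
  unfold smS; split_ifs with h
  · rfl
  · rw [map_one, SB.s_eq_one h]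

theorem SMGen.lift_toSB_smSI (i : ℕ) :
    FreeMonoid.lift SMGen.toSB (smSI n i) = (SB.s n i)⁻¹ := by
  unfold smSI; split_ifs with h
  · rfl
  · rw [map_one, SB.s_eq_one h, inv_one]

theorem SMGen.lift_toSB_smT (i : ℕ) : FreeMonoid.lift SMGen.toSB (smT n i) = SB.t n i := by
  unfold smT; split_ifs with h
  · rfl
  · rw [map_one, SB.t_eq_one h]

def SM.toSB : SM n →* SB n :=
  (conGen (SMRel n)).lift (FreeMonoid.lift SMGen.toSB) <| Con.conGen_le.2 fun u v h => by
    cases h <;>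
      simp only [Con.ker_rel, map_mul, map_one, SMGen.lift_toSB_smS, SMGen.lift_toSB_smSI,
        SMGen.lift_toSB_smT]
    case inv_right => exact mul_inv_cancel _
    case inv_left => exact inv_mul_cancel _
    case braid i h => exact SB.braid i h
    case sig_comm i j hi hj hij => exact SB.sig_comm i j hi hj hij
    case p_comm i j hi hj hij => exact SB.tau_comm i j hi hj hij
    case p_sig_far_pos i j hi hj hij => exact SB.tau_sig_far i j hi hj hij
    case p_sig_far_neg i j hi hj hij => exact (Commute.inv_right (SB.tau_sig_far i j hi hj hij)).eq
    case p_sig_pos i h => exact SB.tau_sig i h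
    case p_sig_neg i h => exact (Commute.inv_right (SB.tau_sig i h)).eq
    case ssp i h => exact SB.sst i h
    case ssp' i h => exact SB.sst' i h

theorem SM.toSB_s (i : ℕ) : SM.toSB (SM.s n i) = SB.s n i := SMGen.lift_toSB_smS i

theorem SM.toSB_sInv (i : ℕ) : SM.toSB (SM.sInv n i) = (SB.s n i)⁻¹ := SMGen.lift_toSB_smSI i

theorem SM.toSB_tau (i : ℕ) : SM.toSB (SM.tau n i) = SB.t n i := SMGen.lift_toSB_smT i

end Canonical

/-! ## The embedding -/

section Embedding

variable {n : ℕ}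

open BraidGroup (toSMUnits toSMUnits_s)
open SemidirectProduct

theorem BandMove.inr_mul_inl {u : BraidGroup n} {i j : ℕ} (h : BandMove n u i j) :
    (inr u : SBSemidirect n) * inl (.of (Band.mk 1 i)) = inl (.of (Band.mk 1 j)) * inr u := by
  have hu : u • Band.mk (n := n) 1 i = Band.mk 1 j := by
    rw [Band.smul_mk, mul_one, ← Band.mk_mul_eq h 1, one_mul]
  rw [← hu, ← TraceGroup.toMulAut_of Band.Apart.smul, inl_aut, map_inv, inv_mul_cancel_right]

def SBGen.toSemidirect : SBGen n → SBSemidirect n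
  | .sig i _ => inr (BraidGroup.s n i)
  | .tau i _ => inl (.of (Band.mk 1 i))

theorem SBGen.lift_toSemidirect_sbS {i : ℕ} (h : 1 ≤ i ∧ i ≤ n - 1) :
    FreeGroup.lift SBGen.toSemidirect (sbS n i) = inr (BraidGroup.s n i) := by
  rw [sbS, dif_pos h, FreeGroup.lift_apply_of]; rfl

theorem SBGen.lift_toSemidirect_sbT {i : ℕ} (h : 1 ≤ i ∧ i ≤ n - 1) :
    FreeGroup.lift SBGen.toSemidirect (sbT n i) = inl (.of (Band.mk 1 i)) := by
  rw [sbT, dif_pos h, FreeGroup.lift_apply_of]; rfl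

def SB.toSemidirect : SB n →* SBSemidirect n :=
  PresentedGroup.toGroup (f := SBGen.toSemidirect) <| by
    intro r hr
    cases hr <;> rw [map_mul, map_inv, mul_inv_eq_one]
    case braid i h =>
      obtain ⟨hi, hi'⟩ := bounds_of_succ_bounds h
      simpa only [map_mul, SBGen.lift_toSemidirect_sbS hi, SBGen.lift_toSemidirect_sbS hi'] using
        congrArg inr (BraidGroup.braid i h)
    case sig_comm i j hi hj hij =>
      simpa only [map_mul, SBGen.lift_toSemidirect_sbS hi, SBGen.lift_toSemidirect_sbS hj] using
        congrArg inr (BraidGroup.comm i j hi hj hij)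
    case tau_comm i j hi hj hij =>
      simpa only [map_mul, SBGen.lift_toSemidirect_sbT hi, SBGen.lift_toSemidirect_sbT hj] using
        congrArg inl (TraceGroup.of_mul_of_comm (E := Band.Apart) ⟨1, i, j, hi, hj, hij, rfl, rfl⟩)
    case tau_sig_far i j hi hj hij =>
      simpa only [map_mul, SBGen.lift_toSemidirect_sbS hj, SBGen.lift_toSemidirect_sbT hi] using
        (BandMove.far hi hj hij).inr_mul_inl.symm
    case tau_sig i h =>
      simpa only [map_mul, SBGen.lift_toSemidirect_sbS h, SBGen.lift_toSemidirect_sbT h] using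
        (BandMove.sig h).inr_mul_inl.symm
    case sst i h =>
      obtain ⟨hi, hi'⟩ := bounds_of_succ_bounds h
      simpa only [map_mul, SBGen.lift_toSemidirect_sbS hi, SBGen.lift_toSemidirect_sbS hi',
        SBGen.lift_toSemidirect_sbT hi, SBGen.lift_toSemidirect_sbT hi', mul_assoc] using
        (BandMove.sig_sig h).inr_mul_inl
    case sst' i h =>
      obtain ⟨hi, hi'⟩ := bounds_of_succ_bounds h
      simpa only [map_mul, SBGen.lift_toSemidirect_sbS hi, SBGen.lift_toSemidirect_sbS hi',
        SBGen.lift_toSemidirect_sbT hi, SBGen.lift_toSemidirect_sbT hi', mul_assoc] using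
        (BandMove.sig_sig' h).inr_mul_inl

theorem SB.toSemidirect_s {i : ℕ} (h : 1 ≤ i ∧ i ≤ n - 1) :
    SB.toSemidirect (SB.s n i) = inr (BraidGroup.s n i) := by
  rw [SB.s_of h]; exact PresentedGroup.toGroup.of _

theorem SB.toSemidirect_t {i : ℕ} (h : 1 ≤ i ∧ i ≤ n - 1) :
    SB.toSemidirect (SB.t n i) = inl (.of (Band.mk 1 i)) := by
  rw [SB.t_of h]; exact PresentedGroup.toGroup.of _

def SMSemidirect.toSBSemidirect : SMSemidirect n →* SBSemidirect n :=
  MonoidSemidirectProduct.toSemidirectProduct (TraceMonoid.toTraceGroup _)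
    (TraceMonoid.toTraceGroup_toMonoidEnd _)

theorem SMSemidirect.toSBSemidirect_injective :
    Function.Injective (SMSemidirect.toSBSemidirect (n := n)) :=
  MonoidSemidirectProduct.toSemidirectProduct_injective _ TraceMonoid.toTraceGroup_injective

def SMGen.toSemidirect : SMGen n → SMSemidirect n
  | .sig i _ => ⟨1, BraidGroup.s n i⟩
  | .sigInv i _ => ⟨1, (BraidGroup.s n i)⁻¹⟩
  | .tau i _ => ⟨.of _ (Band.mk 1 i), 1⟩

theorem SMSemidirect.toSBSemidirect_comp_lift :
    SMSemidirect.toSBSemidirect.comp (FreeMonoid.lift SMGen.toSemidirect) =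
      (SB.toSemidirect.comp SM.toSB).comp (conGen (SMRel n)).mk' := by
  refine FreeMonoid.hom_eq fun g => ?_
  cases g with
  | sig i h =>
    show SMSemidirect.toSBSemidirect ⟨1, BraidGroup.s n i⟩ = SB.toSemidirect (SB.s n i)
    rw [SB.toSemidirect_s h]; ext <;> simp [SMSemidirect.toSBSemidirect]
  | sigInv i h =>
    show SMSemidirect.toSBSemidirect ⟨1, (BraidGroup.s n i)⁻¹⟩ = SB.toSemidirect (SB.s n i)⁻¹
    rw [map_inv, SB.toSemidirect_s h]; ext <;> simp [SMSemidirect.toSBSemidirect]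
  | tau i h =>
    show SMSemidirect.toSBSemidirect ⟨.of _ (Band.mk 1 i), 1⟩ = SB.toSemidirect (SB.t n i)
    rw [SB.toSemidirect_t h]; ext <;> simp [SMSemidirect.toSBSemidirect]

/-- The relations of `SM n` hold in `SMSemidirect n` because they hold after the injective map
into the group `SBSemidirect n`, where they are relations of `SB n`. -/
def SM.toSemidirect : SM n →* SMSemidirect n :=
  (conGen (SMRel n)).lift (FreeMonoid.lift SMGen.toSemidirect) <| Con.conGen_le.2 fun u v h =>
    SMSemidirect.toSBSemidirect_injective <|
      (DFunLike.congr_fun SMSemidirect.toSBSemidirect_comp_lift u).trans <|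
        (congrArg (SB.toSemidirect.comp SM.toSB) (SM.mk_eq_of_rel h)).trans
          (DFunLike.congr_fun SMSemidirect.toSBSemidirect_comp_lift v).symm

theorem SM.toSemidirect_s {i : ℕ} (h : 1 ≤ i ∧ i ≤ n - 1) :
    SM.toSemidirect (SM.s n i) = ⟨1, BraidGroup.s n i⟩ := by
  rw [SM.s_eq_mk h]; rfl

theorem SM.toSemidirect_sInv {i : ℕ} (h : 1 ≤ i ∧ i ≤ n - 1) :
    SM.toSemidirect (SM.sInv n i) = ⟨1, (BraidGroup.s n i)⁻¹⟩ := by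
  rw [SM.sInv_eq_mk h]; rfl

theorem SM.toSemidirect_tau {i : ℕ} (h : 1 ≤ i ∧ i ≤ n - 1) :
    SM.toSemidirect (SM.tau n i) = ⟨.of _ (Band.mk 1 i), 1⟩ := by
  rw [SM.tau_eq_mk h]; rfl

theorem SM.toSBSemidirect_comp_toSemidirect :
    SMSemidirect.toSBSemidirect.comp SM.toSemidirect = SB.toSemidirect.comp (SM.toSB (n := n)) :=
  MonoidHom.ext fun x => Con.induction_on (c := conGen (SMRel n)) x
    (DFunLike.congr_fun SMSemidirect.toSBSemidirect_comp_lift)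

theorem SMSemidirect.toSM_comp_toSemidirect :
    SMSemidirect.toSM.comp SM.toSemidirect = MonoidHom.id (SM n) := by
  refine Con.hom_ext (FreeMonoid.hom_eq fun g => ?_)
  show SMSemidirect.toSM (SM.toSemidirect ((conGen (SMRel n)).mk' (.of g))) =
    (conGen (SMRel n)).mk' (.of g)
  cases g with
  | sig i h =>
    rw [← SM.s_eq_mk h, SM.toSemidirect_s h]
    simp only [SMSemidirect.toSM, MonoidSemidirectProduct.lift_apply, map_one, one_mul,
      toSMUnits_s h]
    rfl
  | sigInv i h =>
    rw [← SM.sInv_eq_mk h, SM.toSemidirect_sInv h]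
    simp only [SMSemidirect.toSM, MonoidSemidirectProduct.lift_apply, map_one, one_mul, map_inv,
      toSMUnits_s h]
    rfl
  | tau i h =>
    rw [← SM.tau_eq_mk h, SM.toSemidirect_tau h]
    simp [SMSemidirect.toSM]

theorem SM.toSB_injective : Function.Injective (SM.toSB (n := n)) := by
  refine Function.Injective.of_comp (f := SB.toSemidirect) ?_
  rw [← MonoidHom.coe_comp, ← SM.toSBSemidirect_comp_toSemidirect, MonoidHom.coe_comp]
  exact SMSemidirect.toSBSemidirect_injective.comp
    (Function.LeftInverse.injective (g := SMSemidirect.toSM)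
      (DFunLike.congr_fun SMSemidirect.toSM_comp_toSemidirect))

end Embedding

theorem sm_embeds_in_sb_general (n : ℕ) :
    ∃ f : SM n →* SB n,
      (∀ i : ℕ, 1 ≤ i → i ≤ n - 1 →
        f (SM.s n i) = SB.s n i ∧
        f (SM.sInv n i) = (SB.s n i)⁻¹ ∧
        f (SM.tau n i) = SB.t n i) ∧
      Function.Injective f :=
  ⟨SM.toSB, fun i _ _ => ⟨SM.toSB_s i, SM.toSB_sInv i, SM.toSB_tau i⟩, SM.toSB_injective⟩

/-- For every n ≥ 2, the canonical monoid homomorphism from the singular braid monoid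
`SM n` to the singular braid group `SB n` — sending σ_i ↦ σ_i, σ_i⁻¹ ↦ σ_i⁻¹ and
τ_i ↦ τ_i for 1 ≤ i ≤ n−1 — is injective; in particular `SM n` embeds in a group. -/
theorem sm_embeds_in_sb (n : ℕ) (hn : 2 ≤ n) :
    ∃ f : SM n →* SB n,
      (∀ i : ℕ, 1 ≤ i → i ≤ n - 1 →
        f (SM.s n i) = SB.s n i ∧
        f (SM.sInv n i) = (SB.s n i)⁻¹ ∧
        f (SM.tau n i) = SB.t n i) ∧
      Function.Injective f :=
  sm_embeds_in_sb_general n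
end

section
/- Mobility property for tied braids: for every n ≥ 2, every element α of the tied braid monoid TM_n can be written as α = β γ, where β lies in the submonoid of TM_n generated by the elements σ_1,…,σ_{n−1}, σ_1⁻¹,…,σ_{n−1}⁻¹ and γ lies in the submonoid of TM_n generated by the generalized ties η_{i,j} for 1 ≤ i < j ≤ n. -/
/-!
The tied braid monoid `TM n` (n ≥ 2), presented by generators
σ_1,…,σ_{n−1}, σ_1⁻¹,…,σ_{n−1}⁻¹, η_1,…,η_{n−1} subject to the relations:
σ_i σ_i⁻¹ = σ_i⁻¹ σ_i = 1; σ_i σ_{i+1} σ_i = σ_{i+1} σ_i σ_{i+1};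
σ_i σ_j = σ_j σ_i for |i−j| ≥ 2; η_i η_j = η_j η_i for all i, j;
η_i σ_i = σ_i η_i; η_i σ_j = σ_j η_i for |i−j| ≥ 2;
η_i σ_j σ_i^ε = σ_j σ_i^ε η_j for |i−j| = 1, ε = ±1;
η_i η_j σ_i = η_j σ_i η_j = σ_i η_i η_j for |i−j| = 1; η_i² = η_i.
-/

/-- Generators of the tied braid monoid: σ_i, σ_i⁻¹ and η_i for 1 ≤ i ≤ n−1. -/
inductive TMGen (n : ℕ) : Type
  | sig (i : ℕ) (h : 1 ≤ i ∧ i ≤ n - 1) : TMGen n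
  | sigInv (i : ℕ) (h : 1 ≤ i ∧ i ≤ n - 1) : TMGen n
  | eta (i : ℕ) (h : 1 ≤ i ∧ i ≤ n - 1) : TMGen n

/-- The word σ_i in the free monoid on the generators. -/
def wS (n i : ℕ) : FreeMonoid (TMGen n) :=
  if h : 1 ≤ i ∧ i ≤ n - 1 then FreeMonoid.of (TMGen.sig i h) else 1

/-- The word σ_i⁻¹ in the free monoid on the generators. -/
def wSI (n i : ℕ) : FreeMonoid (TMGen n) :=
  if h : 1 ≤ i ∧ i ≤ n - 1 then FreeMonoid.of (TMGen.sigInv i h) else 1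

/-- The word η_i in the free monoid on the generators. -/
def wE (n i : ℕ) : FreeMonoid (TMGen n) :=
  if h : 1 ≤ i ∧ i ≤ n - 1 then FreeMonoid.of (TMGen.eta i h) else 1

/-- The defining relations of the tied braid monoid `TM n`. -/
inductive TMRel (n : ℕ) : FreeMonoid (TMGen n) → FreeMonoid (TMGen n) → Prop
  | inv_right (i : ℕ) (h : 1 ≤ i ∧ i ≤ n - 1) :
      TMRel n (wS n i * wSI n i) 1
  | inv_left (i : ℕ) (h : 1 ≤ i ∧ i ≤ n - 1) :
      TMRel n (wSI n i * wS n i) 1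
  | braid (i : ℕ) (h : 1 ≤ i ∧ i + 1 ≤ n - 1) :
      TMRel n (wS n i * wS n (i+1) * wS n i) (wS n (i+1) * wS n i * wS n (i+1))
  | sig_comm (i j : ℕ) (hi : 1 ≤ i ∧ i ≤ n - 1) (hj : 1 ≤ j ∧ j ≤ n - 1)
      (hij : i + 2 ≤ j ∨ j + 2 ≤ i) :
      TMRel n (wS n i * wS n j) (wS n j * wS n i)
  | eta_comm (i j : ℕ) (hi : 1 ≤ i ∧ i ≤ n - 1) (hj : 1 ≤ j ∧ j ≤ n - 1) :
      TMRel n (wE n i * wE n j) (wE n j * wE n i)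
  | eta_sig (i : ℕ) (h : 1 ≤ i ∧ i ≤ n - 1) :
      TMRel n (wE n i * wS n i) (wS n i * wE n i)
  | eta_sig_far (i j : ℕ) (hi : 1 ≤ i ∧ i ≤ n - 1) (hj : 1 ≤ j ∧ j ≤ n - 1)
      (hij : i + 2 ≤ j ∨ j + 2 ≤ i) :
      TMRel n (wE n i * wS n j) (wS n j * wE n i)
  | eta_slide_pos (i j : ℕ) (hi : 1 ≤ i ∧ i ≤ n - 1) (hj : 1 ≤ j ∧ j ≤ n - 1)
      (hij : j = i + 1 ∨ i = j + 1) :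
      TMRel n (wE n i * wS n j * wS n i) (wS n j * wS n i * wE n j)
  | eta_slide_neg (i j : ℕ) (hi : 1 ≤ i ∧ i ≤ n - 1) (hj : 1 ≤ j ∧ j ≤ n - 1)
      (hij : j = i + 1 ∨ i = j + 1) :
      TMRel n (wE n i * wS n j * wSI n i) (wS n j * wSI n i * wE n j)
  | eta_eta_sig₁ (i j : ℕ) (hi : 1 ≤ i ∧ i ≤ n - 1) (hj : 1 ≤ j ∧ j ≤ n - 1)
      (hij : j = i + 1 ∨ i = j + 1) :
      TMRel n (wE n i * wE n j * wS n i) (wE n j * wS n i * wE n j)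
  | eta_eta_sig₂ (i j : ℕ) (hi : 1 ≤ i ∧ i ≤ n - 1) (hj : 1 ≤ j ∧ j ≤ n - 1)
      (hij : j = i + 1 ∨ i = j + 1) :
      TMRel n (wE n j * wS n i * wE n j) (wS n i * wE n i * wE n j)
  | eta_idem (i : ℕ) (h : 1 ≤ i ∧ i ≤ n - 1) :
      TMRel n (wE n i * wE n i) (wE n i)

/-- The tied braid monoid `TM n`: the quotient of the free monoid on the
generators by the congruence generated by the defining relations. -/
def TM (n : ℕ) := (conGen (TMRel n)).Quotient

instance (n : ℕ) : Monoid (TM n) :=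
  inferInstanceAs (Monoid ((conGen (TMRel n)).Quotient))

/-- The generator σ_i of `TM n` (defined for 1 ≤ i ≤ n−1; junk value 1 otherwise). -/
def TM.s (n i : ℕ) : TM n := (conGen (TMRel n)).mk' (wS n i)

/-- The generator σ_i⁻¹ of `TM n` (defined for 1 ≤ i ≤ n−1; junk value 1 otherwise). -/
def TM.sInv (n i : ℕ) : TM n := (conGen (TMRel n)).mk' (wSI n i)

/-- The generator η_i of `TM n` (defined for 1 ≤ i ≤ n−1; junk value 1 otherwise). -/
def TM.e (n i : ℕ) : TM n := (conGen (TMRel n)).mk' (wE n i)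

/-- The generalized tie η_{i,j} = σ_i σ_{i+1} ⋯ σ_{j−2} η_{j−1} σ_{j−2}⁻¹ ⋯ σ_{i+1}⁻¹ σ_i⁻¹,
for 1 ≤ i < j ≤ n (in particular η_{i,i+1} = η_i). -/
def TM.genTie (n i j : ℕ) : TM n :=
  (((List.range' i (j - 1 - i)).map (TM.s n)).prod) * TM.e n (j - 1) *
    (((List.range' i (j - 1 - i)).reverse.map (TM.sInv n)).prod)

/-!
Conjugation by σ_k^{±1} maps every generalized tie to a generalized tie (it moves the ends of
the tie by the transposition (k k+1)), so a product γ of ties can be pushed to the right past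
any σ_k^{±1}: γ σ = σ (σ⁻¹ γ σ). Since each η_i is itself a tie, reading a word in the
generators from left to right and pushing every tie to the right end gives α = β γ.
-/

section UnitConj

variable {M : Type*} [Monoid M]

def unitConj (u : Mˣ) : M →* M where
  toFun x := u * x * ↑u⁻¹
  map_one' := by simp
  map_mul' x y := by simp [mul_assoc]

theorem unitConj_apply (u : Mˣ) (x : M) : unitConj u x = u * x * ↑u⁻¹ := rfl

@[simp]
theorem unitConj_one (x : M) : unitConj 1 x = x := by simp [unitConj_apply]

theorem unitConj_mul (u v : Mˣ) (x : M) : unitConj (u * v) x = unitConj u (unitConj v x) := by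
  simp [unitConj_apply, mul_assoc]

theorem unitConj_eq_self {u : Mˣ} {x : M} (h : Commute (u : M) x) : unitConj u x = x := by
  rw [unitConj_apply, h.eq, mul_assoc, Units.mul_inv, mul_one]

theorem mul_units_eq_mul_unitConj (x : M) (u : Mˣ) : x * u = u * unitConj u⁻¹ x := by
  simp [unitConj_apply, mul_assoc]

theorem unitConj_inv_eq_unitConj_of_mul_eq {u v : Mˣ} {x y : M} (h : x * u * v = u * v * y) :
    unitConj u⁻¹ x = unitConj v y := by
  have h' := congrArg (fun z : M => (↑u⁻¹ : M) * z * ↑v⁻¹) h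
  simpa [unitConj_apply, mul_assoc] using h'

theorem unitConj_mem_closure {S : Set M} {u : Mˣ}
    (hS : ∀ x ∈ S, unitConj u x ∈ Submonoid.closure S) {x : M}
    (hx : x ∈ Submonoid.closure S) : unitConj u x ∈ Submonoid.closure S :=
  (Submonoid.closure_le (S := (Submonoid.closure S).comap (unitConj u))).2 hS hx

@[simp]
theorem unitConj_unitConj_inv (u : Mˣ) (x : M) : unitConj u (unitConj u⁻¹ x) = x := by
  rw [← unitConj_mul, mul_inv_cancel, unitConj_one]

theorem unitConj_inv_eq_iff {u : Mˣ} {x y : M} : unitConj u⁻¹ x = y ↔ unitConj u y = x := by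
  constructor <;> rintro rfl <;> simp [← unitConj_mul]

theorem unitConj_comm {u v : Mˣ} (h : Commute u v) (x : M) :
    unitConj u (unitConj v x) = unitConj v (unitConj u x) := by
  rw [← unitConj_mul, h.eq, unitConj_mul]

theorem unitConj_eq_self_of_mem_pair {g u : Mˣ} {x : M} (h : Commute (g : M) x)
    (hu : u ∈ ({g, g⁻¹} : Set Mˣ)) : unitConj u x = x := by
  rcases hu with rfl | rfl
  exacts [unitConj_eq_self h, unitConj_eq_self h.units_inv_left]

end UnitConj

section InvPair

variable {G : Type*} [Group G] {g u : G}

theorem inv_mem_pair (hu : u ∈ ({g, g⁻¹} : Set G)) : u⁻¹ ∈ ({g, g⁻¹} : Set G) := by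
  rcases hu with rfl | rfl
  exacts [Or.inr rfl, Or.inl (inv_inv g)]

theorem Commute.of_mem_pair {w : G} (h : Commute g w) (hu : u ∈ ({g, g⁻¹} : Set G)) :
    Commute u w := by
  rcases hu with rfl | rfl
  exacts [h, h.inv_left]

theorem exists_mem_pair_mul_eq {g' w : G} (h : g * w = w * g') (hu : u ∈ ({g, g⁻¹} : Set G)) :
    ∃ u' ∈ ({g', g'⁻¹} : Set G), u * w = w * u' := by
  rcases hu with rfl | rfl
  · exact ⟨g', Or.inl rfl, h⟩
  · refine ⟨g'⁻¹, Or.inr rfl, ?_⟩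
    rw [inv_mul_eq_iff_eq_mul, ← mul_assoc, h, mul_inv_cancel_right]

end InvPair

namespace TM

variable {n : ℕ}

theorem mk_eq_mk_of_rel {a b : FreeMonoid (TMGen n)} (h : TMRel n a b) :
    (conGen (TMRel n)).mk' a = (conGen (TMRel n)).mk' b :=
  (Con.eq _).2 (ConGen.Rel.of _ _ h)

theorem s_eq_one {i : ℕ} (h : ¬(1 ≤ i ∧ i ≤ n - 1)) : TM.s n i = 1 := by
  rw [TM.s, wS, dif_neg h, map_one]; rfl

theorem sInv_eq_one {i : ℕ} (h : ¬(1 ≤ i ∧ i ≤ n - 1)) : TM.sInv n i = 1 := by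
  rw [TM.sInv, wSI, dif_neg h, map_one]; rfl

theorem e_eq_one {i : ℕ} (h : ¬(1 ≤ i ∧ i ≤ n - 1)) : TM.e n i = 1 := by
  rw [TM.e, wE, dif_neg h, map_one]; rfl

theorem s_mul_sInv (i : ℕ) : TM.s n i * TM.sInv n i = 1 := by
  by_cases h : 1 ≤ i ∧ i ≤ n - 1
  · exact mk_eq_mk_of_rel (.inv_right i h)
  · rw [s_eq_one h, sInv_eq_one h, mul_one]

theorem sInv_mul_s (i : ℕ) : TM.sInv n i * TM.s n i = 1 := by
  by_cases h : 1 ≤ i ∧ i ≤ n - 1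
  · exact mk_eq_mk_of_rel (.inv_left i h)
  · rw [s_eq_one h, sInv_eq_one h, mul_one]

theorem commute_s_s {i j : ℕ} (hij : i + 2 ≤ j ∨ j + 2 ≤ i) :
    Commute (TM.s n i) (TM.s n j) := by
  by_cases hi : 1 ≤ i ∧ i ≤ n - 1
  · by_cases hj : 1 ≤ j ∧ j ≤ n - 1
    · exact mk_eq_mk_of_rel (.sig_comm i j hi hj hij)
    · rw [s_eq_one hj]; exact Commute.one_right _
  · rw [s_eq_one hi]; exact Commute.one_left _

theorem commute_s_e_self (i : ℕ) : Commute (TM.s n i) (TM.e n i) := by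
  by_cases h : 1 ≤ i ∧ i ≤ n - 1
  · exact (mk_eq_mk_of_rel (.eta_sig i h)).symm
  · rw [s_eq_one h]; exact Commute.one_left _

theorem commute_s_e_of_far {i j : ℕ} (hij : i + 2 ≤ j ∨ j + 2 ≤ i) :
    Commute (TM.s n j) (TM.e n i) := by
  by_cases hi : 1 ≤ i ∧ i ≤ n - 1
  · by_cases hj : 1 ≤ j ∧ j ≤ n - 1
    · exact (mk_eq_mk_of_rel (.eta_sig_far i j hi hj hij)).symm
    · rw [s_eq_one hj]; exact Commute.one_left _
  · rw [e_eq_one hi]; exact Commute.one_right _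

theorem e_mul_s_mul_s {i j : ℕ} (hi : 1 ≤ i ∧ i ≤ n - 1) (hj : 1 ≤ j ∧ j ≤ n - 1)
    (hij : j = i + 1 ∨ i = j + 1) :
    TM.e n i * TM.s n j * TM.s n i = TM.s n j * TM.s n i * TM.e n j :=
  mk_eq_mk_of_rel (.eta_slide_pos i j hi hj hij)

theorem e_mul_s_mul_sInv {i j : ℕ} (hi : 1 ≤ i ∧ i ≤ n - 1) (hj : 1 ≤ j ∧ j ≤ n - 1)
    (hij : j = i + 1 ∨ i = j + 1) :
    TM.e n i * TM.s n j * TM.sInv n i = TM.s n j * TM.sInv n i * TM.e n j :=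
  mk_eq_mk_of_rel (.eta_slide_neg i j hi hj hij)

def sigma (n i : ℕ) : (TM n)ˣ := ⟨TM.s n i, TM.sInv n i, s_mul_sInv i, sInv_mul_s i⟩

@[simp]
theorem val_sigma (i : ℕ) : (sigma n i : TM n) = TM.s n i := rfl

@[simp]
theorem val_inv_sigma (i : ℕ) : (↑(sigma n i)⁻¹ : TM n) = TM.sInv n i := rfl

theorem sigma_braid {i : ℕ} (h : 1 ≤ i ∧ i + 1 ≤ n - 1) :
    sigma n i * sigma n (i + 1) * sigma n i = sigma n (i + 1) * sigma n i * sigma n (i + 1) :=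
  Units.ext (mk_eq_mk_of_rel (.braid i h))

theorem commute_sigma_sigma {i j : ℕ} (hij : i + 2 ≤ j ∨ j + 2 ≤ i) :
    Commute (sigma n i) (sigma n j) :=
  Units.ext (commute_s_s hij)

def sigmaPM (n k : ℕ) : Set (TM n)ˣ := {sigma n k, (sigma n k)⁻¹}

def braidWord (n i m : ℕ) : (TM n)ˣ := ((List.range' i m).map (sigma n)).prod

theorem braidWord_zero (i : ℕ) : braidWord n i 0 = 1 := rfl

theorem braidWord_succ (i m : ℕ) :
    braidWord n i (m + 1) = sigma n i * braidWord n (i + 1) m := by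
  simp [braidWord, List.range'_succ]

theorem braidWord_succ' (i m : ℕ) :
    braidWord n i (m + 1) = braidWord n i m * sigma n (i + m) := by
  simp [braidWord, List.range'_concat]

theorem commute_sigma_braidWord {k i m : ℕ} (h : k + 2 ≤ i ∨ i + m + 1 ≤ k) :
    Commute (sigma n k) (braidWord n i m) := by
  induction m generalizing i with
  | zero => exact Commute.one_right _
  | succ m ih =>
    rw [braidWord_succ]
    exact (commute_sigma_sigma (by omega)).mul_right (ih (by omega))

theorem sigma_succ_mul_braidWord {i m c : ℕ} (hi : 1 ≤ i) (hm : i + m ≤ n) (hc : i ≤ c)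
    (hcm : c + 2 ≤ i + m) : sigma n (c + 1) * braidWord n i m = braidWord n i m * sigma n c := by
  induction m generalizing i with
  | zero => omega
  | succ m ih =>
    rcases hc.eq_or_lt with rfl | hc
    · obtain ⟨m, rfl⟩ : ∃ m', m = m' + 1 := ⟨m - 1, by omega⟩
      have hfar : Commute (sigma n i) (braidWord n (i + 2) m) :=
        commute_sigma_braidWord (Or.inl le_rfl)
      rw [braidWord_succ, braidWord_succ, ← mul_assoc, ← mul_assoc,
        ← sigma_braid ⟨hi, by omega⟩, mul_assoc _ (sigma n i), hfar.eq]
      simp only [mul_assoc]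
    · rw [braidWord_succ, ← mul_assoc, (commute_sigma_sigma (by omega)).eq, mul_assoc,
        ih (by omega) (by omega) (by omega) (by omega), mul_assoc]

theorem val_braidWord (i m : ℕ) :
    (braidWord n i m : TM n) = ((List.range' i m).map (TM.s n)).prod := by
  induction m generalizing i with
  | zero => simp [braidWord_zero]
  | succ m ih => simp [braidWord_succ, List.range'_succ, ih]

theorem val_inv_braidWord (i m : ℕ) :
    (↑(braidWord n i m)⁻¹ : TM n) = ((List.range' i m).reverse.map (TM.sInv n)).prod := by
  induction m generalizing i with
  | zero => simp [braidWord_zero]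
  | succ m ih => simp [braidWord_succ, List.range'_succ, ih]

/-- The generalized tie η_{i,i+m+1}, indexed by its left end and its length. -/
def tie (n i m : ℕ) : TM n := unitConj (braidWord n i m) (TM.e n (i + m))

theorem genTie_eq_tie (i m : ℕ) : genTie n i (i + m + 1) = tie n i m := by
  rw [genTie, tie, unitConj_apply, val_braidWord, val_inv_braidWord,
    show i + m + 1 - 1 - i = m by omega, show i + m + 1 - 1 = i + m by omega]

theorem tie_zero (i : ℕ) : tie n i 0 = TM.e n i := by
  simp [tie, braidWord_zero]

/-- The two slide relations show that for adjacent indices the sign of the conjugating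
generator is irrelevant. -/
theorem unitConj_sigma_e_adj {a : ℕ} {u v : (TM n)ˣ} (ha : 1 ≤ a) (han : a + 1 ≤ n - 1)
    (hu : u ∈ sigmaPM n (a + 1)) (hv : v ∈ sigmaPM n a) :
    unitConj u (TM.e n a) = unitConj v (TM.e n (a + 1)) := by
  have hpos := unitConj_inv_eq_unitConj_of_mul_eq (u := sigma n (a + 1)) (v := sigma n a)
    (e_mul_s_mul_s (n := n) ⟨ha, by omega⟩ ⟨by omega, han⟩ (Or.inl rfl))
  have hneg := unitConj_inv_eq_unitConj_of_mul_eq (u := sigma n (a + 1)) (v := (sigma n a)⁻¹)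
    (e_mul_s_mul_sInv (n := n) ⟨ha, by omega⟩ ⟨by omega, han⟩ (Or.inl rfl))
  have hpos' := unitConj_inv_eq_unitConj_of_mul_eq (u := sigma n a) (v := sigma n (a + 1))
    (e_mul_s_mul_s (n := n) ⟨by omega, han⟩ ⟨ha, by omega⟩ (Or.inr rfl))
  rcases hu with rfl | rfl <;> rcases hv with rfl | rfl
  exacts [hpos'.symm.trans (hneg.symm.trans hpos), hpos'.symm, hpos, hneg]

theorem tie_succ (i m : ℕ) : tie n i (m + 1) = unitConj (sigma n i) (tie n (i + 1) m) := by
  rw [tie, tie, braidWord_succ, unitConj_mul, show i + (m + 1) = i + 1 + m by omega]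

theorem tie_eq_unitConj_inv_braidWord {i m : ℕ} (hi : 1 ≤ i) (hm : i + m + 1 ≤ n) :
    tie n i m = unitConj (braidWord n (i + 1) m)⁻¹ (TM.e n i) := by
  induction m generalizing i with
  | zero => simp [tie_zero, braidWord_zero]
  | succ m ih =>
    have hfar : Commute (sigma n i) (braidWord n (i + 2) m)⁻¹ :=
      (commute_sigma_braidWord (Or.inl le_rfl)).inv_right
    rw [tie_succ, ih (by omega) (by omega), unitConj_comm hfar,
      ← unitConj_sigma_e_adj (u := (sigma n (i + 1))⁻¹) hi (by omega) (Or.inr rfl)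
        (Or.inl rfl),
      braidWord_succ, mul_inv_rev, unitConj_mul]

section Conjugation

variable {k : ℕ} {u : (TM n)ˣ}

theorem unitConj_tie_of_far {i m : ℕ} (hu : u ∈ sigmaPM n k)
    (h : k + 2 ≤ i ∨ i + m + 2 ≤ k) : unitConj u (tie n i m) = tie n i m := by
  rw [tie, unitConj_comm ((commute_sigma_braidWord (by omega)).of_mem_pair hu),
    unitConj_eq_self_of_mem_pair (commute_s_e_of_far (by omega)) hu]

theorem unitConj_tie_of_inner {i m : ℕ} (hu : u ∈ sigmaPM n (k + 1)) (hi : 1 ≤ i)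
    (hm : i + m + 1 ≤ n) (hik : i ≤ k) (hkm : k + 2 ≤ i + m) :
    unitConj u (tie n i m) = tie n i m := by
  obtain ⟨u', hu', h⟩ := exists_mem_pair_mul_eq
    (sigma_succ_mul_braidWord hi (by omega) hik hkm) hu
  rw [tie, ← unitConj_mul, h, unitConj_mul,
    unitConj_eq_self_of_mem_pair (commute_s_e_of_far (by omega)) hu']

theorem unitConj_tie_zero {i : ℕ} (hu : u ∈ sigmaPM n i) :
    unitConj u (tie n i 0) = tie n i 0 := by
  rw [tie_zero, unitConj_eq_self_of_mem_pair (commute_s_e_self i) hu]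

theorem unitConj_tie_succ_left {i m : ℕ} (hu : u ∈ sigmaPM n i) (hi : 1 ≤ i)
    (hm : i + m + 2 ≤ n) : unitConj u (tie n i (m + 1)) = tie n (i + 1) m := by
  have hfar : Commute u (braidWord n (i + 2) m)⁻¹ :=
    ((commute_sigma_braidWord (Or.inl le_rfl)).of_mem_pair hu).inv_right
  rw [tie_eq_unitConj_inv_braidWord hi (by omega), braidWord_succ, mul_inv_rev, unitConj_mul,
    unitConj_comm hfar, unitConj_sigma_e_adj hi (by omega) (Or.inr rfl) (inv_mem_pair hu),
    unitConj_unitConj_inv]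
  exact (tie_eq_unitConj_inv_braidWord (by omega) (by omega)).symm

theorem unitConj_tie_succ_right {i m : ℕ} (hu : u ∈ sigmaPM n (i + m + 1)) (hi : 1 ≤ i)
    (hm : i + m + 2 ≤ n) : unitConj u (tie n i (m + 1)) = tie n i m := by
  rw [tie, braidWord_succ', unitConj_mul, show i + (m + 1) = i + m + 1 by omega,
    ← unitConj_sigma_e_adj (by omega) (by omega) (inv_mem_pair hu) (Or.inl rfl),
    unitConj_comm ((commute_sigma_braidWord (by omega)).of_mem_pair hu),
    unitConj_unitConj_inv, tie]

end Conjugation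

def sigmas (n : ℕ) : Set (TM n) :=
  {x | ∃ i : ℕ, 1 ≤ i ∧ i ≤ n - 1 ∧ (x = TM.s n i ∨ x = TM.sInv n i)}

def genTies (n : ℕ) : Set (TM n) :=
  {x | ∃ i j : ℕ, 1 ≤ i ∧ i < j ∧ j ≤ n ∧ x = genTie n i j}

theorem tie_mem_genTies {i m : ℕ} (hi : 1 ≤ i) (hm : i + m + 1 ≤ n) :
    tie n i m ∈ genTies n :=
  ⟨i, i + m + 1, hi, by omega, hm, (genTie_eq_tie i m).symm⟩

theorem unitConj_tie_mem_genTies {k i m : ℕ} {u : (TM n)ˣ} (hk : 1 ≤ k ∧ k ≤ n - 1)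
    (hu : u ∈ sigmaPM n k) (hi : 1 ≤ i) (hm : i + m + 1 ≤ n) :
    unitConj u (tie n i m) ∈ genTies n := by
  have hcases : k + 2 ≤ i ∨ i + m + 2 ≤ k ∨ k + 1 = i ∨ (k = i ∧ m = 0) ∨
      (k = i ∧ 0 < m) ∨ (i < k ∧ k < i + m) ∨ (i < k ∧ k = i + m) ∨ k = i + m + 1 := by
    omega
  -- The cases `k + 1 = i` and `k = i + m + 1` are inverse to the cases `k = i` and `k = i + m`.
  rcases hcases with h | h | rfl | ⟨rfl, rfl⟩ | ⟨rfl, h⟩ | ⟨h, h'⟩ | ⟨h, rfl⟩ | rfl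
  · rw [unitConj_tie_of_far hu (Or.inl h)]; exact tie_mem_genTies hi hm
  · rw [unitConj_tie_of_far hu (Or.inr h)]; exact tie_mem_genTies hi hm
  · rw [unitConj_inv_eq_iff.1
      (unitConj_tie_succ_left (m := m) (inv_mem_pair hu) hk.1 (by omega))]
    exact tie_mem_genTies hk.1 (by omega)
  · rw [unitConj_tie_zero hu]; exact tie_mem_genTies hi hm
  · obtain ⟨m, rfl⟩ : ∃ m', m = m' + 1 := ⟨m - 1, by omega⟩
    rw [unitConj_tie_succ_left hu hi hm]; exact tie_mem_genTies (by omega) (by omega)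
  · obtain ⟨c, rfl⟩ : ∃ c, k = c + 1 := ⟨k - 1, by omega⟩
    rw [unitConj_tie_of_inner hu hi hm (by omega) (by omega)]; exact tie_mem_genTies hi hm
  · obtain ⟨m, rfl⟩ : ∃ m', m = m' + 1 := ⟨m - 1, by omega⟩
    rw [show i + (m + 1) = i + m + 1 by omega] at hu
    rw [unitConj_tie_succ_right hu hi hm]; exact tie_mem_genTies hi (by omega)
  · rw [unitConj_inv_eq_iff.1 (unitConj_tie_succ_right (inv_mem_pair hu) hi (by omega))]
    exact tie_mem_genTies hi (by omega)

theorem unitConj_mem_genTies {k : ℕ} {u : (TM n)ˣ} (hk : 1 ≤ k ∧ k ≤ n - 1)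
    (hu : u ∈ sigmaPM n k) {x : TM n} (hx : x ∈ genTies n) : unitConj u x ∈ genTies n := by
  obtain ⟨i, j, hi, hij, hj, rfl⟩ := hx
  obtain ⟨m, rfl⟩ : ∃ m, j = i + m + 1 := ⟨j - i - 1, by omega⟩
  rw [genTie_eq_tie]
  exact unitConj_tie_mem_genTies hk hu hi hj

theorem exists_mul_eq_mul_of_mem_sigmas {γ y : TM n}
    (hγ : γ ∈ Submonoid.closure (genTies n)) (hy : y ∈ sigmas n) :
    ∃ γ' ∈ Submonoid.closure (genTies n), γ * y = y * γ' := by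
  obtain ⟨k, hk1, hk2, hy⟩ := hy
  obtain ⟨u, hu, rfl⟩ : ∃ u ∈ sigmaPM n k, (u : TM n) = y := by
    rcases hy with rfl | rfl
    exacts [⟨_, Or.inl rfl, rfl⟩, ⟨_, Or.inr rfl, rfl⟩]
  refine ⟨unitConj u⁻¹ γ, ?_, mul_units_eq_mul_unitConj γ u⟩
  exact unitConj_mem_closure (fun x hx =>
    Submonoid.subset_closure (unitConj_mem_genTies ⟨hk1, hk2⟩ (inv_mem_pair hu) hx)) hγ

theorem closure_sigmas_union_genTies : Submonoid.closure (sigmas n ∪ genTies n) = ⊤ := by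
  refine (Submonoid.eq_top_iff' _).2 fun α => ?_
  induction α using Con.induction_on with | _ w => ?_
  induction w using FreeMonoid.inductionOn with
  | one => exact one_mem _
  | mul x y hx hy => exact mul_mem hx hy
  | of g =>
    apply Submonoid.subset_closure
    cases g with
    | sig i h => exact Or.inl ⟨i, h.1, h.2, Or.inl (by rw [TM.s, wS, dif_pos h]; rfl)⟩
    | sigInv i h =>
      exact Or.inl ⟨i, h.1, h.2, Or.inr (by rw [TM.sInv, wSI, dif_pos h]; rfl)⟩
    | eta i h =>
      refine Or.inr ?_
      have he : tie n i 0 ∈ genTies n := tie_mem_genTies h.1 (by omega)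
      rwa [tie_zero, TM.e, wE, dif_pos h] at he

end TM

theorem tm_mobility_general (n : ℕ) (α : TM n) :
    ∃ β γ : TM n,
      β ∈ Submonoid.closure
          {x : TM n | ∃ i : ℕ, 1 ≤ i ∧ i ≤ n - 1 ∧ (x = TM.s n i ∨ x = TM.sInv n i)} ∧
      γ ∈ Submonoid.closure
          {x : TM n | ∃ i j : ℕ, 1 ≤ i ∧ i < j ∧ j ≤ n ∧ x = TM.genTie n i j} ∧
      α = β * γ := by
  induction α using
    Submonoid.induction_of_closure_eq_top_right TM.closure_sigmas_union_genTies with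
  | one => exact ⟨1, 1, one_mem _, one_mem _, (mul_one 1).symm⟩
  | mul_right _ y hy ih =>
    obtain ⟨β, γ, hβ, hγ, rfl⟩ := ih
    rcases hy with hy | hy
    · obtain ⟨γ', hγ', h⟩ := TM.exists_mul_eq_mul_of_mem_sigmas hγ hy
      exact ⟨β * y, γ', mul_mem hβ (Submonoid.subset_closure hy), hγ',
        by rw [mul_assoc, h, mul_assoc]⟩
    · exact ⟨β, γ * y, hβ, mul_mem hγ (Submonoid.subset_closure hy), mul_assoc _ _ _⟩

/-- **Mobility property for tied braids**: for every n ≥ 2, every element α of the tied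
braid monoid `TM n` can be written as α = β γ with β in the submonoid generated by the
σ_i, σ_i⁻¹ (1 ≤ i ≤ n−1) and γ in the submonoid generated by the generalized ties
η_{i,j} (1 ≤ i < j ≤ n). -/
theorem tm_mobility (n : ℕ) (hn : 2 ≤ n) (α : TM n) :
    ∃ β γ : TM n,
      β ∈ Submonoid.closure
          {x : TM n | ∃ i : ℕ, 1 ≤ i ∧ i ≤ n - 1 ∧ (x = TM.s n i ∨ x = TM.sInv n i)} ∧
      γ ∈ Submonoid.closure
          {x : TM n | ∃ i j : ℕ, 1 ≤ i ∧ i < j ∧ j ≤ n ∧ x = TM.genTie n i j} ∧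
      α = β * γ :=
  tm_mobility_general n α
end

section
/- Relation (iii) of the generalized-tie relations: for every n ≥ 2 and all indices 2 ≤ i < j ≤ n, the equality σ_{i−1} η_{i,j} = η_{i−1,j} σ_{i−1} holds in the tied braid monoid TM_n. -/
namespace TM

theorem sInv_mul_s_s12 {n k : ℕ} (hk : 1 ≤ k ∧ k ≤ n - 1) : sInv n k * s n k = 1 := by
  show (conGen (TMRel n)).mk' (wSI n k) * (conGen (TMRel n)).mk' (wS n k) =
    (conGen (TMRel n)).mk' 1
  rw [← map_mul]
  exact (Con.eq _).2 (ConGen.Rel.of _ _ (TMRel.inv_left k hk))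

theorem genTie_eq_s_mul_genTie_mul_sInv {n i j : ℕ} (hij : i + 1 < j) :
    genTie n i j = s n i * genTie n (i + 1) j * sInv n i := by
  have hrange : List.range' i (j - 1 - i) = i :: List.range' (i + 1) (j - 1 - (i + 1)) := by
    rw [← List.range'_succ]
    congr 1
    omega
  simp only [genTie, hrange, List.map_cons, List.prod_cons, List.reverse_cons,
    List.map_append, List.prod_append, List.map_nil, List.prod_nil, mul_one, mul_assoc]

end TM

theorem tm_genTie_rel_iii_general (n : ℕ) (i j : ℕ)
    (hi : 2 ≤ i) (hij : i < j) (hj : j ≤ n) :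
    TM.s n (i - 1) * TM.genTie n i j = TM.genTie n (i - 1) j * TM.s n (i - 1) := by
  obtain ⟨k, rfl⟩ : ∃ k, i = k + 1 := ⟨i - 1, by omega⟩
  rw [Nat.add_sub_cancel, TM.genTie_eq_s_mul_genTie_mul_sInv hij, mul_assoc _ (TM.sInv n k),
    TM.sInv_mul_s_s12 ⟨by omega, by omega⟩, mul_one]

/-- **Relation (iii) of the generalized-tie relations**: for every n ≥ 2 and indices
2 ≤ i < j ≤ n, σ_{i−1} η_{i,j} = η_{i−1,j} σ_{i−1} holds in `TM n`. -/
theorem tm_genTie_rel_iii (n : ℕ) (hn : 2 ≤ n) (i j : ℕ)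
    (hi : 2 ≤ i) (hij : i < j) (hj : j ≤ n) :
    TM.s n (i - 1) * TM.genTie n i j = TM.genTie n (i - 1) j * TM.s n (i - 1) :=
  tm_genTie_rel_iii_general n i j hi hij hj
end
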